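/- Let d be a positive integer and let g : ℂ⁴ → ℂ⁴ be a map satisfying g(G_X(u,v,w)) = G_X(T_d(u), T_d(v), T_d(w)) for all u, v, w ∈ ℂ. Define G_P : ℂ² → ℂ⁴ by G_P(w,t) = ((w+t)², (w·t+2)², (w·t+2)·(w+t)², (w+t)⁴). Then: (1) g(G_P(w,t)) = G_P(T_d(w), T_d(t)) for all w, t ∈ ℂ; and (2) g maps the surface S_P = {(p,q,r,s) ∈ ℂ⁴ : p² = s and q·s = r²} onto itself: g(S_P) = S_P. -/
import Mathlib


/-- The polynomial parametrization `G_X : ℂ³ → ℂ⁴`. -/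
noncomputable def GX (u v w : ℂ) : ℂ × ℂ × ℂ × ℂ :=
  (v ^ 2 + u * v * w + w ^ 2,
   (u + v * w) ^ 2,
   (u + v * w) * (2 * v * w + u * (v ^ 2 + w ^ 2) / 2),
   (2 * v * w + u * (v ^ 2 + w ^ 2) / 2) ^ 2)

/-- The polynomial parametrization `G_P : ℂ² → ℂ⁴` of `S_P`. -/
noncomputable def GP (w t : ℂ) : ℂ × ℂ × ℂ × ℂ :=
  ((w + t) ^ 2, (w * t + 2) ^ 2, (w * t + 2) * (w + t) ^ 2, (w + t) ^ 4)

lemma GP_eq_GX (w t : ℂ) : GP w t = GX 2 w t := by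
  simp only [GP, GX, Prod.mk.injEq]
  refine ⟨by ring, by ring, by ring, by ring⟩

lemma GP_mem (w t : ℂ) : (GP w t).1 ^ 2 = (GP w t).2.2.2 ∧
    (GP w t).2.1 * (GP w t).2.2.2 = (GP w t).2.2.1 ^ 2 := by
  simp only [GP]
  constructor <;> ring

lemma aux_inv (y : ℂ) : ∃ z : ℂ, z ≠ 0 ∧ z + z⁻¹ = y := by
  obtain ⟨e, he⟩ := IsAlgClosed.exists_pow_nat_eq (k := ℂ) (y ^ 2 - 4) two_pos
  have hmul : (y + e) / 2 * ((y - e) / 2) = 1 := by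
    linear_combination (-1/4 : ℂ) * he
  have hz : (y + e) / 2 ≠ 0 := left_ne_zero_of_mul_eq_one hmul
  refine ⟨(y + e) / 2, hz, ?_⟩
  have hinv : ((y + e) / 2)⁻¹ = (y - e) / 2 :=
    (eq_inv_of_mul_eq_one_left (by rw [mul_comm] at hmul; exact hmul)).symm
  rw [hinv]; ring

lemma aux_param (p q r s : ℂ) (h1 : p ^ 2 = s) (h2 : q * s = r ^ 2) :
    ∃ w t : ℂ, GP w t = (p, q, r, s) := by
  by_cases hp : p = 0
  · subst hp
    have hs : s = 0 := by simpa using h1.symm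
    subst hs
    have hr : r = 0 := by
      have : r ^ 2 = 0 := by rw [← h2]; ring
      exact pow_eq_zero_iff (n := 2) (by norm_num) |>.mp this
    subst hr
    obtain ⟨c, hc⟩ := IsAlgClosed.exists_pow_nat_eq (k := ℂ) q two_pos
    obtain ⟨w, hw⟩ := IsAlgClosed.exists_pow_nat_eq (k := ℂ) (2 - c) two_pos
    refine ⟨w, -w, ?_⟩
    simp only [GP, Prod.mk.injEq]
    refine ⟨by ring, ?_, by ring, by ring⟩
    have h : w * -w + 2 = c := by linear_combination -hw
    rw [h, hc]
  · have hs : s ≠ 0 := by rw [← h1]; exact pow_ne_zero 2 hp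
    obtain ⟨a, ha⟩ := IsAlgClosed.exists_pow_nat_eq (k := ℂ) p two_pos
    set m := r / p with hm
    have hmp : m * p = r := div_mul_cancel₀ r hp
    have h3 : m ^ 2 * p ^ 2 = r ^ 2 := by rw [← hmp]; ring
    have hmq : m ^ 2 = q := by
      have h4 : m ^ 2 * s = q * s := by
        rw [h2, ← h1, h3]
      exact mul_right_cancel₀ hs h4
    obtain ⟨e, he⟩ := IsAlgClosed.exists_pow_nat_eq (k := ℂ) (a ^ 2 - 4 * (m - 2)) two_pos
    refine ⟨(a + e) / 2, (a - e) / 2, ?_⟩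
    have hsum : (a + e) / 2 + (a - e) / 2 = a := by ring
    have hprod : (a + e) / 2 * ((a - e) / 2) + 2 = m := by
      linear_combination (-1/4 : ℂ) * he
    simp only [GP, Prod.mk.injEq, hsum, hprod]
    refine ⟨ha, hmq, by rw [ha, hmp], by rw [← h1, ← ha]; ring⟩

lemma aux_surj (d : ℕ) (hd : 0 < d) (T : Polynomial ℤ)
    (hT : ∀ s : ℂ, s ≠ 0 → Polynomial.aeval (s + s⁻¹) T = s ^ (d : ℤ) + s ^ (-(d : ℤ)))
    (y : ℂ) : ∃ x : ℂ, Polynomial.aeval x T = y := by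
  obtain ⟨z, hz, hzy⟩ := aux_inv y
  obtain ⟨s, hs⟩ := IsAlgClosed.exists_pow_nat_eq (k := ℂ) z hd
  have hs0 : s ≠ 0 := by
    rintro rfl; exact hz (by rw [← hs, zero_pow hd.ne'])
  refine ⟨s + s⁻¹, ?_⟩
  rw [hT s hs0]
  have h1 : s ^ (d : ℤ) = z := by rw [zpow_natCast, hs]
  have h2 : s ^ (-(d : ℤ)) = z⁻¹ := by rw [zpow_neg, zpow_natCast, hs]
  rw [h1, h2, hzy]

/-- For `g` satisfying `g(G_X(u,v,w)) = G_X(T_d(u),T_d(v),T_d(w))`: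
(1) `g(G_P(w,t)) = G_P(T_d(w), T_d(t))` for all `w, t ∈ ℂ`;
(2) `g` maps the surface `S_P = {p² = s, qs = r²}` onto itself. -/
theorem g_maps_SP_onto_itself (d : ℕ) (hd : 0 < d) (T : Polynomial ℤ)
    (hT : ∀ s : ℂ, s ≠ 0 → Polynomial.aeval (s + s⁻¹) T = s ^ (d : ℤ) + s ^ (-(d : ℤ)))
    (g : ℂ × ℂ × ℂ × ℂ → ℂ × ℂ × ℂ × ℂ)
    (hg : ∀ u v w : ℂ, g (GX u v w)
      = GX (Polynomial.aeval u T) (Polynomial.aeval v T) (Polynomial.aeval w T)) :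
    (∀ w t : ℂ, g (GP w t) = GP (Polynomial.aeval w T) (Polynomial.aeval t T)) ∧
    g '' {x : ℂ × ℂ × ℂ × ℂ | x.1 ^ 2 = x.2.2.2 ∧ x.2.1 * x.2.2.2 = x.2.2.1 ^ 2}
      = {x : ℂ × ℂ × ℂ × ℂ | x.1 ^ 2 = x.2.2.2 ∧ x.2.1 * x.2.2.2 = x.2.2.1 ^ 2} := by
  have hT2 : Polynomial.aeval (2 : ℂ) T = 2 := by
    have h := hT 1 one_ne_zero
    norm_num at h
    exact h
  have part1 : ∀ w t : ℂ, g (GP w t) = GP (Polynomial.aeval w T) (Polynomial.aeval t T) := by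
    intro w t
    rw [GP_eq_GX, hg, hT2]
    exact (GP_eq_GX _ _).symm
  refine ⟨part1, ?_⟩
  ext x
  constructor
  · rintro ⟨y, hy, rfl⟩
    obtain ⟨w, t, h⟩ := aux_param y.1 y.2.1 y.2.2.1 y.2.2.2 hy.1 hy.2
    have h' : GP w t = y := h
    rw [← h', part1]
    exact GP_mem _ _
  · intro hx
    obtain ⟨w, t, h⟩ := aux_param x.1 x.2.1 x.2.2.1 x.2.2.2 hx.1 hx.2
    have h' : GP w t = x := h
    obtain ⟨w', hw'⟩ := aux_surj d hd T hT w
    obtain ⟨t', ht'⟩ := aux_surj d hd T hT t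
    exact ⟨GP w' t', GP_mem _ _, by rw [part1, hw', ht', h']⟩
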